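/- Let h_m, h_e, g_m, g_e, σ, P_j be positive reals with h_m > h_e. Then the function P_s ↦ log₂(1 + P_s h_m²/(σ² + P_j g_m²)) − log₂(1 + P_s h_e²/(σ² + P_j g_e²)) is strictly increasing and strictly concave on (0,∞) if and only if h_m²/(σ² + P_j g_m²) > h_e²/(σ² + P_j g_e²); in particular, if g_e ≥ g_m and h_m > h_e it is strictly increasing and strictly concave. -/

import Mathlib

/-!
Writing `a` and `b` for the effective gains `h² / (σ² + P_j g²)` of the two users, the secure rate is
`R(x) = log₂ (1 + a x) - log₂ (1 + b x)`. Cross-multiplying, `R x < R y` for `0 ≤ x < y` reduces to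
`(y - x) (a - b) > 0`, so `R` is strictly increasing exactly when `b < a`. Its derivative is
`(a - b) / ((1 + a x) (1 + b x) log 2)`, which for `b < a` is strictly decreasing, whence strict
concavity. Finally `g_m ≤ g_e` and `h_e < h_m` make the main user's effective gain the larger one.
-/

open Real Set

noncomputable def secrecyRate (a b x : ℝ) : ℝ :=
  logb 2 (1 + x * a) - logb 2 (1 + x * b)

section SecrecyRate

variable {a b x y : ℝ}

theorem secrecyRate_lt_secrecyRate_iff (ha : 0 ≤ a) (hb : 0 ≤ b) (hx : 0 ≤ x) (hxy : x < y) :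
    secrecyRate a b x < secrecyRate a b y ↔ b < a := by
  have hy : 0 ≤ y := hx.trans hxy.le
  have hxa : 0 < 1 + x * a := by positivity
  have hxb : 0 < 1 + x * b := by positivity
  have hya : 0 < 1 + y * a := by positivity
  have hyb : 0 < 1 + y * b := by positivity
  have hcross : (1 + y * a) * (1 + x * b) - (1 + x * a) * (1 + y * b) = (y - x) * (a - b) := by ring
  rw [secrecyRate, secrecyRate, sub_lt_sub_iff, ← logb_mul hxa.ne' hyb.ne',
    ← logb_mul hya.ne' hxb.ne', logb_lt_logb_iff one_lt_two (by positivity) (by positivity),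
    ← sub_pos, hcross, mul_pos_iff_of_pos_left (sub_pos.2 hxy), sub_pos]

theorem strictMonoOn_secrecyRate_iff (ha : 0 ≤ a) (hb : 0 ≤ b) :
    StrictMonoOn (secrecyRate a b) (Ioi 0) ↔ b < a := by
  refine ⟨fun hmono => ?_, fun hab x hx y _ hxy => ?_⟩
  · exact (secrecyRate_lt_secrecyRate_iff ha hb zero_le_one one_lt_two).1
      (hmono (mem_Ioi.2 one_pos) (mem_Ioi.2 two_pos) one_lt_two)
  · exact (secrecyRate_lt_secrecyRate_iff ha hb (le_of_lt hx) hxy).2 hab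

theorem hasDerivAt_secrecyRate (ha : 1 + x * a ≠ 0) (hb : 1 + x * b ≠ 0) :
    HasDerivAt (secrecyRate a b) ((a - b) / ((1 + x * a) * (1 + x * b) * log 2)) x := by
  have hlog : ∀ c, 1 + x * c ≠ 0 →
      HasDerivAt (fun x => log (1 + x * c)) (c / (1 + x * c)) x := fun c hc => by
    simpa using (((hasDerivAt_id x).mul_const c).const_add 1).log hc
  have hrate : secrecyRate a b = fun x => (log (1 + x * a) - log (1 + x * b)) / log 2 := by
    funext x
    rw [secrecyRate, logb, logb, sub_div]
  rw [hrate]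
  refine (((hlog a ha).sub (hlog b hb)).div_const (log 2)).congr_deriv ?_
  rw [div_sub_div _ _ ha hb, div_div]
  ring

theorem strictConcaveOn_secrecyRate (hb : 0 ≤ b) (hab : b < a) :
    StrictConcaveOn ℝ (Ioi 0) (secrecyRate a b) := by
  have ha : 0 < a := hb.trans_lt hab
  have hderiv : ∀ x ∈ Ioi (0 : ℝ),
      HasDerivAt (secrecyRate a b) ((a - b) / ((1 + x * a) * (1 + x * b) * log 2)) x :=
    fun x (hx : 0 < x) => hasDerivAt_secrecyRate (by positivity) (by positivity)
  refine StrictAntiOn.strictConcaveOn_of_deriv (convex_Ioi 0)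
    (fun x hx => (hderiv x hx).continuousAt.continuousWithinAt) ?_
  rw [interior_Ioi]
  refine StrictAntiOn.congr (fun x (hx : 0 < x) y (hy : 0 < y) hxy => ?_)
    fun x hx => ((hderiv x hx).deriv).symm
  have hlog2 : 0 < log 2 := log_pos one_lt_two
  refine div_lt_div_of_pos_left (sub_pos.2 hab) (by positivity) ?_
  have hprod : (1 + x * a) * (1 + x * b) < (1 + y * a) * (1 + y * b) :=
    mul_lt_mul_of_lt_of_le_of_pos_of_nonneg (by gcongr) (by gcongr) (by positivity) (by positivity)
  gcongr

theorem strictMonoOn_and_strictConcaveOn_secrecyRate_iff (ha : 0 ≤ a) (hb : 0 ≤ b) :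
    StrictMonoOn (secrecyRate a b) (Ioi 0) ∧ StrictConcaveOn ℝ (Ioi 0) (secrecyRate a b) ↔
      b < a :=
  ⟨fun h => (strictMonoOn_secrecyRate_iff ha hb).1 h.1,
    fun hab => ⟨(strictMonoOn_secrecyRate_iff ha hb).2 hab, strictConcaveOn_secrecyRate hb hab⟩⟩

end SecrecyRate

theorem secure_rate_with_jammer_source_power_props_general
    (hm he gm ge σ Pj : ℝ)
    (hhe : 0 < he) (hgm : 0 < gm)
    (hPj : 0 < Pj) (hmain : hm > he) :
    ((StrictMonoOn (fun Ps : ℝ =>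
          Real.logb 2 (1 + Ps * hm ^ 2 / (σ ^ 2 + Pj * gm ^ 2)) -
            Real.logb 2 (1 + Ps * he ^ 2 / (σ ^ 2 + Pj * ge ^ 2))) (Set.Ioi 0) ∧
      StrictConcaveOn ℝ (Set.Ioi 0) (fun Ps : ℝ =>
          Real.logb 2 (1 + Ps * hm ^ 2 / (σ ^ 2 + Pj * gm ^ 2)) -
            Real.logb 2 (1 + Ps * he ^ 2 / (σ ^ 2 + Pj * ge ^ 2)))) ↔
      hm ^ 2 / (σ ^ 2 + Pj * gm ^ 2) > he ^ 2 / (σ ^ 2 + Pj * ge ^ 2)) ∧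
    (ge ≥ gm →
      StrictMonoOn (fun Ps : ℝ =>
          Real.logb 2 (1 + Ps * hm ^ 2 / (σ ^ 2 + Pj * gm ^ 2)) -
            Real.logb 2 (1 + Ps * he ^ 2 / (σ ^ 2 + Pj * ge ^ 2))) (Set.Ioi 0) ∧
      StrictConcaveOn ℝ (Set.Ioi 0) (fun Ps : ℝ =>
          Real.logb 2 (1 + Ps * hm ^ 2 / (σ ^ 2 + Pj * gm ^ 2)) -
            Real.logb 2 (1 + Ps * he ^ 2 / (σ ^ 2 + Pj * ge ^ 2)))) := by
  simp only [mul_div_assoc]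
  have hprops := strictMonoOn_and_strictConcaveOn_secrecyRate_iff
    (a := hm ^ 2 / (σ ^ 2 + Pj * gm ^ 2)) (b := he ^ 2 / (σ ^ 2 + Pj * ge ^ 2))
    (by positivity) (by positivity)
  refine ⟨hprops, fun hg => hprops.2 ?_⟩
  have hgain : he ^ 2 < hm ^ 2 := pow_lt_pow_left₀ hmain hhe.le two_ne_zero
  have hnoise : σ ^ 2 + Pj * gm ^ 2 ≤ σ ^ 2 + Pj * ge ^ 2 := by gcongr
  exact div_lt_div₀ hgain hnoise (by positivity) (by positivity)

theorem secure_rate_with_jammer_source_power_props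
    (hm he gm ge σ Pj : ℝ)
    (hhm : 0 < hm) (hhe : 0 < he) (hgm : 0 < gm) (hge : 0 < ge)
    (hσ : 0 < σ) (hPj : 0 < Pj) (hmain : hm > he) :
    ((StrictMonoOn (fun Ps : ℝ =>
          Real.logb 2 (1 + Ps * hm ^ 2 / (σ ^ 2 + Pj * gm ^ 2)) -
            Real.logb 2 (1 + Ps * he ^ 2 / (σ ^ 2 + Pj * ge ^ 2))) (Set.Ioi 0) ∧
      StrictConcaveOn ℝ (Set.Ioi 0) (fun Ps : ℝ =>
          Real.logb 2 (1 + Ps * hm ^ 2 / (σ ^ 2 + Pj * gm ^ 2)) -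
            Real.logb 2 (1 + Ps * he ^ 2 / (σ ^ 2 + Pj * ge ^ 2)))) ↔
      hm ^ 2 / (σ ^ 2 + Pj * gm ^ 2) > he ^ 2 / (σ ^ 2 + Pj * ge ^ 2)) ∧
    (ge ≥ gm →
      StrictMonoOn (fun Ps : ℝ =>
          Real.logb 2 (1 + Ps * hm ^ 2 / (σ ^ 2 + Pj * gm ^ 2)) -
            Real.logb 2 (1 + Ps * he ^ 2 / (σ ^ 2 + Pj * ge ^ 2))) (Set.Ioi 0) ∧
      StrictConcaveOn ℝ (Set.Ioi 0) (fun Ps : ℝ =>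
          Real.logb 2 (1 + Ps * hm ^ 2 / (σ ^ 2 + Pj * gm ^ 2)) -
            Real.logb 2 (1 + Ps * he ^ 2 / (σ ^ 2 + Pj * ge ^ 2)))) :=
  secure_rate_with_jammer_source_power_props_general hm he gm ge σ Pj hhe hgm hPj hmain
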